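/- Let ι be a finite index set and let P be a root pairing over ℝ between finite-dimensional real vector spaces M and N (so the roots P.root i lie in M, the coroots P.coroot i lie in N, M and N are in perfect pairing, and ⟨P.root i, P.coroot i⟩ = 2 for all i). For any subset s ⊆ ι, define M_♯ = {f ∈ M : ⟨f, P.coroot i⟩ = 0 for all i ∈ s} and M_♭ = span_ℝ{P.root i : i ∈ s}. Then M_♯ and M_♭ are complementary subspaces, i.e. M = M_♯ ⊕ M_♭. -/

import Mathlib

open Module Submodule

section aux

variable {ι M N : Type*} [Fintype ι]
    [AddCommGroup M] [Module ℝ M] [FiniteDimensional ℝ M]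
    [AddCommGroup N] [Module ℝ N] [FiniteDimensional ℝ N]
    (P : RootPairing ι ℝ M N) (s : Set ι)

set_option linter.unusedSectionVars false in
lemma aux_mem_sharp {x : M} :
    x ∈ (⨅ i ∈ s, LinearMap.ker (P.toLinearMap.flip (P.coroot i))) ↔
      ∀ i ∈ s, P.toLinearMap x (P.coroot i) = 0 := by
  simp [Submodule.mem_iInf, LinearMap.mem_ker]

lemma aux_disjoint :
    Disjoint (⨅ i ∈ s, LinearMap.ker (P.toLinearMap.flip (P.coroot i)))
      (Submodule.span ℝ (P.root '' s)) := by
  rw [Submodule.disjoint_def]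
  intro x hx hx'
  rw [aux_mem_sharp] at hx
  -- key: RootForm x (root i) = 0 for i ∈ s
  have hpol : ∀ y : M, P.toLinearMap x (P.Polarization y) = P.RootForm x y := by
    intro y
    simp [RootPairing.Polarization_apply, RootPairing.rootForm_apply_apply, mul_comm]
  have key : ∀ i ∈ s, P.RootForm x (P.root i) = 0 := by
    intro i hi
    have h2 := congrArg (P.toLinearMap x) (P.rootForm_self_smul_coroot i)
    rw [map_smul, map_nsmul, hx i hi, smul_zero] at h2
    have h3 : (2 : ℕ) • P.toLinearMap x (P.Polarization (P.root i)) = 0 := h2.symm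
    have h4 : P.toLinearMap x (P.Polarization (P.root i)) = 0 := by
      have := h3
      simpa [two_smul] using (by linarith [ (by simpa [two_nsmul] using h3 : P.toLinearMap x (P.Polarization (P.root i)) + P.toLinearMap x (P.Polarization (P.root i)) = 0 )] : P.toLinearMap x (P.Polarization (P.root i)) = 0)
    rw [hpol] at h4
    exact h4
  have hBxx : P.RootForm x x = 0 := by
    have : ∀ y ∈ Submodule.span ℝ (P.root '' s), P.RootForm x y = 0 := by
      intro y hy
      induction hy using Submodule.span_induction with
      | mem y hy => obtain ⟨i, hi, rfl⟩ := hy; exact key i hi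
      | zero => simp
      | add y z _ _ hy hz => simp [hy, hz]
      | smul c y _ hy => simp [hy]
    exact this x hx'
  have hxspan : x ∈ P.rootSpan ℝ := by
    refine Submodule.span_mono ?_ hx'
    exact Set.image_subset_range _ _
  exact P.eq_zero_of_mem_rootSpan_of_rootForm_self_eq_zero hxspan hBxx

lemma aux_le :
    finrank ℝ (Submodule.span ℝ (P.root '' s)) ≤
      finrank ℝ (Submodule.span ℝ (P.coroot '' s)) := by
  set U := Submodule.span ℝ (P.root '' s)
  set V := Submodule.span ℝ (P.coroot '' s)
  let ψ : M →ₗ[ℝ] Module.Dual ℝ V := V.subtype.dualMap ∘ₗ P.toLinearMap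
  have hinj : Function.Injective (ψ.domRestrict U) := by
    rw [LinearMap.injective_domRestrict_iff, disjoint_iff, eq_bot_iff]
    rintro x ⟨hxU, hxψ⟩
    have hxψ : ψ x = 0 := hxψ
    have hsharp : (x : M) ∈ (⨅ i ∈ s, LinearMap.ker (P.toLinearMap.flip (P.coroot i))) := by
      rw [aux_mem_sharp]
      intro i hi
      have : P.coroot i ∈ V := Submodule.subset_span ⟨i, hi, rfl⟩
      have := congrFun (congrArg DFunLike.coe hxψ) ⟨P.coroot i, this⟩
      simpa [ψ] using this
    have := (aux_disjoint P s).le_bot ⟨hsharp, hxU⟩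
    simpa using this
  calc finrank ℝ U ≤ finrank ℝ (Module.Dual ℝ V) :=
        LinearMap.finrank_le_finrank_of_injective hinj
    _ = finrank ℝ V := Subspace.dual_finrank_eq

lemma aux_finrank_eq :
    finrank ℝ (Submodule.span ℝ (P.root '' s)) =
      finrank ℝ (Submodule.span ℝ (P.coroot '' s)) :=
  le_antisymm (aux_le P s) (aux_le P.flip s)

end aux

/-- Let `ι` be a finite index set and `P` a root pairing over `ℝ` between
finite-dimensional real vector spaces `M` and `N`.  For any subset `s ⊆ ι`, the subspace
`M_♯ = {f ∈ M : ⟨f, coroot i⟩ = 0 for all i ∈ s}` and the span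
`M_♭ = span_ℝ {root i : i ∈ s}` are complementary, i.e. `M = M_♯ ⊕ M_♭`. -/
theorem stmt6 {ι M N : Type*} [Fintype ι]
    [AddCommGroup M] [Module ℝ M] [FiniteDimensional ℝ M]
    [AddCommGroup N] [Module ℝ N] [FiniteDimensional ℝ N]
    (P : RootPairing ι ℝ M N) (s : Set ι) :
    IsCompl
      (⨅ i ∈ s, LinearMap.ker (P.toLinearMap.flip (P.coroot i)))
      (Submodule.span ℝ (P.root '' s)) := by
  set U := Submodule.span ℝ (P.root '' s)
  set V := Submodule.span ℝ (P.coroot '' s)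
  set Msharp := ⨅ i ∈ s, LinearMap.ker (P.toLinearMap.flip (P.coroot i)) with hMs
  have hdisj := aux_disjoint P s
  -- identify Msharp with the dual annihilator of V mapped back
  have hcomap : Msharp = (V.dualAnnihilator).comap P.toPerfPair.toLinearMap := by
    ext x
    rw [hMs, aux_mem_sharp]
    simp only [Submodule.mem_comap, LinearEquiv.coe_coe, Submodule.mem_dualAnnihilator]
    constructor
    · intro h w hw
      have : V ≤ LinearMap.ker (P.toPerfPair x) := by
        rw [Submodule.span_le]
        rintro - ⟨i, hi, rfl⟩
        simpa using h i hi
      simpa using this hw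
    · intro h i hi
      simpa using h (P.coroot i) (Submodule.subset_span ⟨i, hi, rfl⟩)
  have hfr : finrank ℝ Msharp = finrank ℝ (V.dualAnnihilator) := by
    rw [hcomap, Submodule.comap_equiv_eq_map_symm]
    exact LinearEquiv.finrank_map_eq _ _
  have hann : finrank ℝ (V.dualAnnihilator) + finrank ℝ V = finrank ℝ N := by
    have h1 : finrank ℝ (V.dualAnnihilator) = finrank ℝ (N ⧸ V) :=
      ((Subspace.quotEquivAnnihilator V).finrank_eq).symm
    rw [h1, Submodule.finrank_quotient_add_finrank]
  have hMN : finrank ℝ M = finrank ℝ N := Module.finrank_of_isPerfPair P.toLinearMap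
  have hsum : finrank ℝ Msharp + finrank ℝ U = finrank ℝ M := by
    rw [hfr, aux_finrank_eq P s, hMN]
    exact hann
  refine ⟨hdisj, ?_⟩
  rw [codisjoint_iff]
  exact Submodule.eq_top_of_disjoint _ _ hsum.ge hdisj
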